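/- Let π be a probability measure on [0,1], let φ ∈ [0,1], n ≥ 1, and define the posterior mean m = (∫₀¹ t^{1+nφ}(1-t)^{n(1-φ)} π(dt)) / (∫₀¹ t^{nφ}(1-t)^{n(1-φ)} π(dt)), assuming the denominator is positive. Then for any h ∈ (0, 1/4), |φ - m| ≤ h + 1/R(n, φ, h), where R(n,φ,h) = (∫_{[0,1]∩[φ-h,φ+h]} t^{nφ}(1-t)^{n(1-φ)} π(dt)) / (∫_{[0,1]∩[φ-h,φ+h]^c} t^{nφ}(1-t)^{n(1-φ)} π(dt)), assuming both integrals in R are positive. -/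
import Mathlib


open MeasureTheory Set

theorem stmt7 (π : Measure ℝ) [IsProbabilityMeasure π]
    (hsupp : π (Set.Icc (0:ℝ) 1)ᶜ = 0)
    (φ : ℝ) (hφ : φ ∈ Set.Icc (0:ℝ) 1) (n : ℕ) (hn : 1 ≤ n)
    (h : ℝ) (hh : h ∈ Set.Ioo (0:ℝ) (1/4))
    (hden : 0 < ∫ t, t ^ ((n : ℝ) * φ) * (1 - t) ^ ((n : ℝ) * (1 - φ)) ∂π)
    (hnum : 0 < ∫ t in Set.Icc (0:ℝ) 1 ∩ Set.Icc (φ - h) (φ + h),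
        t ^ ((n : ℝ) * φ) * (1 - t) ^ ((n : ℝ) * (1 - φ)) ∂π)
    (hcomp : 0 < ∫ t in Set.Icc (0:ℝ) 1 ∩ (Set.Icc (φ - h) (φ + h))ᶜ,
        t ^ ((n : ℝ) * φ) * (1 - t) ^ ((n : ℝ) * (1 - φ)) ∂π) :
    |φ - (∫ t, t ^ (1 + (n : ℝ) * φ) * (1 - t) ^ ((n : ℝ) * (1 - φ)) ∂π) /
          (∫ t, t ^ ((n : ℝ) * φ) * (1 - t) ^ ((n : ℝ) * (1 - φ)) ∂π)|
      ≤ h + 1 /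
        ((∫ t in Set.Icc (0:ℝ) 1 ∩ Set.Icc (φ - h) (φ + h),
            t ^ ((n : ℝ) * φ) * (1 - t) ^ ((n : ℝ) * (1 - φ)) ∂π) /
         (∫ t in Set.Icc (0:ℝ) 1 ∩ (Set.Icc (φ - h) (φ + h))ᶜ,
            t ^ ((n : ℝ) * φ) * (1 - t) ^ ((n : ℝ) * (1 - φ)) ∂π)) := by
  obtain ⟨hφ0, hφ1⟩ := hφ
  obtain ⟨hh0, hh4⟩ := hh
  set f : ℝ → ℝ := fun t => t ^ ((n : ℝ) * φ) * (1 - t) ^ ((n : ℝ) * (1 - φ)) with hf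
  set A : Set ℝ := Set.Icc (0:ℝ) 1 ∩ Set.Icc (φ - h) (φ + h) with hA
  set B : Set ℝ := Set.Icc (0:ℝ) 1 ∩ (Set.Icc (φ - h) (φ + h))ᶜ with hB
  have he1 : (0:ℝ) ≤ (n : ℝ) * φ := mul_nonneg (Nat.cast_nonneg n) hφ0
  have he2 : (0:ℝ) ≤ (n : ℝ) * (1 - φ) := mul_nonneg (Nat.cast_nonneg n) (by linarith)
  -- a.e. membership in [0,1]
  have hae : ∀ᵐ t ∂π, t ∈ Set.Icc (0:ℝ) 1 := by
    rw [MeasureTheory.ae_iff]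
    exact hsupp
  -- bounds for f on [0,1]
  have hf_nonneg : ∀ t ∈ Set.Icc (0:ℝ) 1, 0 ≤ f t := by
    intro t ht
    exact mul_nonneg (Real.rpow_nonneg ht.1 _) (Real.rpow_nonneg (by linarith [ht.2]) _)
  have hf_le_one : ∀ t ∈ Set.Icc (0:ℝ) 1, f t ≤ 1 := by
    intro t ht
    have h1 : t ^ ((n : ℝ) * φ) ≤ 1 := Real.rpow_le_one ht.1 ht.2 he1
    have h2 : (1 - t) ^ ((n : ℝ) * (1 - φ)) ≤ 1 :=
      Real.rpow_le_one (by linarith [ht.2]) (by linarith [ht.1]) he2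
    calc f t ≤ 1 * 1 := mul_le_mul h1 h2 (Real.rpow_nonneg (by linarith [ht.2]) _) zero_le_one
    _ = 1 := by ring
  have hf_meas : Measurable f :=
    ((Real.continuous_rpow_const he1).mul
      ((Real.continuous_rpow_const he2).comp (continuous_const.sub continuous_id))).measurable
  -- integrability
  have hint_f : Integrable f π := by
    refine ⟨hf_meas.aestronglyMeasurable, ?_⟩
    apply MeasureTheory.HasFiniteIntegral.mono' (g := fun _ => (1:ℝ))
      (MeasureTheory.hasFiniteIntegral_const 1)
    filter_upwards [hae] with t ht
    rw [Real.norm_eq_abs, abs_of_nonneg (hf_nonneg t ht)]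
    exact hf_le_one t ht
  have hint_g : Integrable (fun t => (φ - t) * f t) π := by
    refine ⟨((measurable_const.sub measurable_id).mul hf_meas).aestronglyMeasurable, ?_⟩
    apply MeasureTheory.HasFiniteIntegral.mono' (g := fun _ => (1:ℝ))
      (MeasureTheory.hasFiniteIntegral_const 1)
    filter_upwards [hae] with t ht
    rw [Real.norm_eq_abs, abs_mul, abs_of_nonneg (hf_nonneg t ht)]
    have h1 : |φ - t| ≤ 1 := by
      rw [abs_le]; constructor <;> [linarith [ht.2]; linarith [ht.1]]
    calc |φ - t| * f t ≤ 1 * 1 :=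
      mul_le_mul h1 (hf_le_one t ht) (hf_nonneg t ht) zero_le_one
    _ = 1 := by ring
  have hint_tf : Integrable (fun t => t * f t) π := by
    have : (fun t => t * f t) = fun t => φ * f t - (φ - t) * f t := by ext t; ring
    rw [this]
    exact (hint_f.const_mul φ).sub hint_g
  -- restrict equals π
  have hres : π.restrict (Set.Icc (0:ℝ) 1) = π :=
    Measure.restrict_eq_self_of_ae_mem hae
  -- measurability of sets
  have hmA : MeasurableSet A := (measurableSet_Icc).inter measurableSet_Icc
  have hmB : MeasurableSet B := (measurableSet_Icc).inter measurableSet_Icc.compl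
  have hdisj : Disjoint A B :=
    Disjoint.inter_left' _ (Disjoint.inter_right' _ disjoint_compl_right)
  have hunion : A ∪ B = Set.Icc (0:ℝ) 1 := by
    rw [hA, hB, ← Set.inter_union_distrib_left, Set.union_compl_self, Set.inter_univ]
  set IA := ∫ t in A, f t ∂π with hIA
  set IB := ∫ t in B, f t ∂π with hIB
  -- denominator equals IA + IB
  have hD : (∫ t, f t ∂π) = IA + IB := by
    calc (∫ t, f t ∂π) = ∫ t in Set.Icc (0:ℝ) 1, f t ∂π := by rw [hres]
      _ = ∫ t in A ∪ B, f t ∂π := by rw [hunion]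
      _ = IA + IB :=
        MeasureTheory.setIntegral_union hdisj hmB hint_f.integrableOn hint_f.integrableOn
  -- numerator rewrite
  have hN : (∫ t, t ^ (1 + (n : ℝ) * φ) * (1 - t) ^ ((n : ℝ) * (1 - φ)) ∂π)
      = ∫ t, t * f t ∂π := by
    apply MeasureTheory.integral_congr_ae
    filter_upwards [hae] with t ht
    rw [Real.rpow_add' ht.1 (by positivity), Real.rpow_one, hf]
    ring
  -- key expression
  have hDpos : 0 < IA + IB := by rw [← hD]; exact hden
  have hkey : φ - (∫ t, t * f t ∂π) / (∫ t, f t ∂π)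
      = (∫ t, (φ - t) * f t ∂π) / (∫ t, f t ∂π) := by
    rw [eq_div_iff (ne_of_gt hden)]
    have : (∫ t, (φ - t) * f t ∂π) = φ * (∫ t, f t ∂π) - ∫ t, t * f t ∂π := by
      rw [← MeasureTheory.integral_const_mul, ← MeasureTheory.integral_sub
        (hint_f.const_mul φ) hint_tf]
      apply integral_congr_ae; filter_upwards with t; ring
    rw [this]; field_simp
  -- bound the numerator integral
  have hbound : |∫ t, (φ - t) * f t ∂π| ≤ h * IA + IB := by
    have hsplit : (∫ t, (φ - t) * f t ∂π)
        = (∫ t in A, (φ - t) * f t ∂π) + ∫ t in B, (φ - t) * f t ∂π := by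
      calc (∫ t, (φ - t) * f t ∂π) = ∫ t in Set.Icc (0:ℝ) 1, (φ - t) * f t ∂π := by rw [hres]
        _ = ∫ t in A ∪ B, (φ - t) * f t ∂π := by rw [hunion]
        _ = _ :=
          MeasureTheory.setIntegral_union hdisj hmB hint_g.integrableOn hint_g.integrableOn
    rw [hsplit]
    have hAbound : |∫ t in A, (φ - t) * f t ∂π| ≤ h * IA := by
      calc |∫ t in A, (φ - t) * f t ∂π| ≤ ∫ t in A, |(φ - t) * f t| ∂π := by
            rw [← Real.norm_eq_abs]
            exact (MeasureTheory.norm_integral_le_integral_norm _).trans_eq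
              (by simp only [Real.norm_eq_abs])
        _ ≤ ∫ t in A, h * f t ∂π := by
            apply MeasureTheory.setIntegral_mono_on
            · exact hint_g.integrableOn.abs
            · exact hint_f.integrableOn.const_mul h
            · exact hmA
            · intro t ht
              rw [abs_mul, abs_of_nonneg (hf_nonneg t ht.1)]
              apply mul_le_mul_of_nonneg_right _ (hf_nonneg t ht.1)
              rw [abs_le]
              exact ⟨by linarith [ht.2.2], by linarith [ht.2.1]⟩
        _ = h * IA := by rw [MeasureTheory.integral_const_mul]
    have hBbound : |∫ t in B, (φ - t) * f t ∂π| ≤ IB := by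
      calc |∫ t in B, (φ - t) * f t ∂π| ≤ ∫ t in B, |(φ - t) * f t| ∂π := by
            rw [← Real.norm_eq_abs]
            exact (MeasureTheory.norm_integral_le_integral_norm _).trans_eq
              (by simp only [Real.norm_eq_abs])
        _ ≤ ∫ t in B, f t ∂π := by
            apply MeasureTheory.setIntegral_mono_on
            · exact hint_g.integrableOn.abs
            · exact hint_f.integrableOn
            · exact hmB
            · intro t ht
              rw [abs_mul, abs_of_nonneg (hf_nonneg t ht.1)]
              have h1 : |φ - t| ≤ 1 := by
                rw [abs_le]; exact ⟨by linarith [ht.1.2], by linarith [ht.1.1]⟩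
              calc |φ - t| * f t ≤ 1 * f t :=
                mul_le_mul_of_nonneg_right h1 (hf_nonneg t ht.1)
              _ = f t := one_mul _
    calc |(∫ t in A, (φ - t) * f t ∂π) + ∫ t in B, (φ - t) * f t ∂π|
        ≤ |∫ t in A, (φ - t) * f t ∂π| + |∫ t in B, (φ - t) * f t ∂π| := abs_add_le _ _
      _ ≤ h * IA + IB := add_le_add hAbound hBbound
  -- final algebra
  rw [hN, hkey, abs_div, abs_of_pos hden, hD, one_div_div]
  calc |∫ t, (φ - t) * f t ∂π| / (IA + IB) ≤ (h * IA + IB) / (IA + IB) := by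
        apply div_le_div_of_nonneg_right hbound hDpos.le
    _ ≤ h + IB / IA := by
        rw [add_div]
        apply add_le_add
        · rw [div_le_iff₀ hDpos]
          nlinarith [hcomp]
        · apply div_le_div_of_nonneg_left (le_of_lt hcomp) hnum
          linarith [hcomp]
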